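/- Let N ≥ 1, n ≥ 0, and let x_0, …, x_{N−1} be nonnegative integers with ∑_k x_k = 2^n. If the probability vector p = (x_0/2^n, …, x_{N−1}/2^n) has exactly m nonzero entries (active states), then p is realizable from the switch set consisting of the single N-state ½-pswitch with at most f(n,m) pswitches. -/

import Mathlib

/-!
Write `g n m = f n m + 1`. Then `g n m` is the minimum over `k ≤ n` of
`(m - 1) * (n - k) + 2 ^ k`, attained at `k = min n ⌈log₂ m⌉`, because raising `k` by one
changes this expression by `2 ^ k - (m - 1)`.

Induct on `n`. A vector `x / 2^(n+1)` with at least two active states is the average of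
`y / 2^n` and `z / 2^n`, where `y` greedily fills the lowest states and `z` takes the rest, so
`y` lies below `z` and they share at most one active state: `m₁ + m₂ ≤ m + 1`. For `q` below
`r` of total mass one, `max(q, min(½-pswitch, r)) = (q + r) / 2`, costing one extra pswitch,
and evaluating the minimum for `g (n+1) m` at `k ≥ 1` and for `g n mᵢ` at `k - 1` gives
`g n m₁ + g n m₂ ≤ g (n+1) m`.
-/

noncomputable section

/-- Series composition: distribution of `min` of two independent states. -/
def smin {N : ℕ} (p q : Fin N → ℝ) : Fin N → ℝ :=
  fun k => ∑ i, ∑ j, if min i j = k then p i * q j else 0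

/-- Parallel composition: distribution of `max` of two independent states. -/
def smax {N : ℕ} (p q : Fin N → ℝ) : Fin N → ℝ :=
  fun k => ∑ i, ∑ j, if max i j = k then p i * q j else 0

/-- The point mass at state `s`. -/
def delta {N : ℕ} (s : Fin N) : Fin N → ℝ := fun i => if i = s then 1 else 0

/-- `Realizable S p m`: the vector `p` is obtained from point masses (0 pswitches)
and elements of the switch set `S` (1 pswitch each) by series and parallel
compositions, using `m` pswitches in total. -/
inductive Realizable {N : ℕ} (S : Set (Fin N → ℝ)) : (Fin N → ℝ) → ℕ → Prop
  | point (s : Fin N) : Realizable S (delta s) 0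
  | single {p : Fin N → ℝ} : p ∈ S → Realizable S p 1
  | series {p q : Fin N → ℝ} {a b : ℕ} :
      Realizable S p a → Realizable S q b → Realizable S (smin p q) (a + b)
  | parallel {p q : Fin N → ℝ} {a b : ℕ} :
      Realizable S p a → Realizable S q b → Realizable S (smax p q) (a + b)

/-- The `N`-state ½-pswitch: probability ½ on state `0`, ½ on state `N-1`,
and `0` elsewhere. -/
def halfSwitch (N : ℕ) : Fin N → ℝ :=
  fun i => (if (i : ℕ) = 0 then (1 : ℝ) / 2 else 0) + (if (i : ℕ) = N - 1 then (1 : ℝ) / 2 else 0)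

/-- The complexity function `f(n,N)`: `2^n - 1` for `n ≤ ⌈log₂ N⌉` and
`(N-1)(n - ⌈log₂ N⌉) + 2^{⌈log₂ N⌉} - 1` for `n ≥ ⌈log₂ N⌉`. -/
def f (n N : ℕ) : ℕ :=
  if n ≤ Nat.clog 2 N then 2 ^ n - 1
  else (N - 1) * (n - Nat.clog 2 N) + 2 ^ (Nat.clog 2 N) - 1

lemma f_add_one_eq (n m : ℕ) :
    f n m + 1 = (m - 1) * (n - min n (Nat.clog 2 m)) + 2 ^ min n (Nat.clog 2 m) := by
  unfold f
  split_ifs with h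
  · rw [min_eq_left h, Nat.sub_self, mul_zero, zero_add]
    have := Nat.one_le_two_pow (n := n)
    omega
  · rw [min_eq_right (by omega)]
    have := Nat.one_le_two_pow (n := Nat.clog 2 m)
    omega

lemma sub_one_mul_add_two_pow_le_of_le_clog {m n k j : ℕ} (hkj : k ≤ j) (hjm : j ≤ Nat.clog 2 m)
    (hjn : j ≤ n) :
    (m - 1) * (n - j) + 2 ^ j ≤ (m - 1) * (n - k) + 2 ^ k := by
  induction j, hkj using Nat.le_induction with
  | base => rfl
  | succ j hkj ih =>
    have hjm' : 2 ^ j < m := Nat.pow_lt_of_lt_clog hjm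
    have hsplit : (m - 1) * (n - j) = (m - 1) * (n - (j + 1)) + (m - 1) := by
      rw [← Nat.mul_succ]; congr 1; omega
    have := ih (by omega) (by omega)
    rw [pow_succ]
    omega

lemma sub_one_mul_add_two_pow_le_of_clog_le {m n k j : ℕ} (hkj : k ≤ j) (hmk : Nat.clog 2 m ≤ k) :
    (m - 1) * (n - k) + 2 ^ k ≤ (m - 1) * (n - j) + 2 ^ j := by
  induction j, hkj using Nat.le_induction with
  | base => rfl
  | succ j hkj ih =>
    have hmj : m ≤ 2 ^ j := (Nat.clog_le_iff_le_pow one_lt_two).1 (hmk.trans hkj)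
    have hsplit : (m - 1) * (n - j) ≤ (m - 1) * (n - (j + 1)) + (m - 1) := by
      rw [← Nat.mul_succ]; exact Nat.mul_le_mul_left _ (by omega)
    rw [pow_succ]
    omega

lemma f_add_one_le {n m k : ℕ} (hk : k ≤ n) : f n m + 1 ≤ (m - 1) * (n - k) + 2 ^ k := by
  rw [f_add_one_eq]
  rcases le_total k (min n (Nat.clog 2 m)) with h | h
  · exact sub_one_mul_add_two_pow_le_of_le_clog h (min_le_right _ _) (min_le_left _ _)
  · rcases min_choice n (Nat.clog 2 m) with hmin | hmin <;> rw [hmin] at h ⊢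
    · rw [le_antisymm hk h]
    · exact sub_one_mul_add_two_pow_le_of_clog_le h le_rfl

lemma f_add_one_add_f_le {n m m₁ m₂ : ℕ} (h₁ : 1 ≤ m₁) (h₂ : 1 ≤ m₂) (hm : 2 ≤ m)
    (hsum : m₁ + m₂ ≤ m + 1) : f n m₁ + 1 + f n m₂ ≤ f (n + 1) m := by
  set k := min (n + 1) (Nat.clog 2 m)
  have hk : 1 ≤ k := le_min (Nat.le_add_left 1 n) (Nat.clog_pos one_lt_two hm)
  have hm₁ := f_add_one_le (n := n) (m := m₁) (k := k - 1) (by omega)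
  have hm₂ := f_add_one_le (n := n) (m := m₂) (k := k - 1) (by omega)
  have hpow : 2 ^ (k - 1) + 2 ^ (k - 1) = 2 ^ k := by
    rw [← two_mul, ← pow_succ', Nat.sub_add_cancel hk]
  have hlin : (m₁ - 1) * (n - (k - 1)) + (m₂ - 1) * (n - (k - 1)) ≤ (m - 1) * (n + 1 - k) := by
    rw [← add_mul, show n - (k - 1) = n + 1 - k by omega]
    exact Nat.mul_le_mul_right _ (by omega)
  have hf : f (n + 1) m + 1 = (m - 1) * (n + 1 - k) + 2 ^ k := f_add_one_eq (n + 1) m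
  omega

open Finset

section Split

variable {ι : Type*} [Fintype ι] [LinearOrder ι]

lemma exists_add_eq_of_sum_eq_add (x : ι → ℕ) {T₁ T₂ : ℕ} (hx : ∑ i, x i = T₁ + T₂) :
    ∃ y z : ι → ℕ, y + z = x ∧ ∑ i, y i = T₁ ∧ ∑ i, z i = T₂ ∧
      ∀ i j, y i ≠ 0 → z j ≠ 0 → i ≤ j := by
  induction T₁ generalizing T₂ with
  | zero => exact ⟨0, x, zero_add x, by simp, by simpa using hx, by simp⟩
  | succ T ih =>
    obtain ⟨y, z, rfl, hy, hz, hyz⟩ := ih (T₂ := T₂ + 1) (by rw [hx]; ring)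
    -- move one unit from the lowest state charged by `z` over to `y`
    have hne : (univ.filter fun i => z i ≠ 0).Nonempty := by
      obtain ⟨k, -, hk⟩ := exists_ne_zero_of_sum_ne_zero (s := univ) (f := z) (by omega)
      exact ⟨k, mem_filter.2 ⟨mem_univ k, hk⟩⟩
    obtain ⟨k, hk, hmin⟩ := exists_min_image _ id hne
    have hk : z k ≠ 0 := (mem_filter.1 hk).2
    have hmin : ∀ j, z j ≠ 0 → k ≤ j := fun j hj => hmin j (mem_filter.2 ⟨mem_univ j, hj⟩)
    set z' := z - Pi.single k 1
    have hz' : z' + Pi.single k 1 = z := by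
      ext j
      rcases eq_or_ne j k with rfl | hj
      · simp only [Pi.add_apply, Pi.sub_apply, Pi.single_eq_same, z']
        omega
      · simp [z', hj]
    refine ⟨y + Pi.single k 1, z', ?_, ?_, ?_, ?_⟩
    · rw [add_assoc, add_comm (Pi.single k 1), hz']
    · simp [sum_add_distrib, hy]
    · rw [← hz'] at hz
      simpa [sum_add_distrib] using hz
    · intro i j hi hj
      have hzj : z j ≠ 0 := fun h => hj (by simp [z', h])
      rcases eq_or_ne i k with rfl | hik
      · exact hmin j hzj
      · exact hyz i j (by simpa [hik] using hi) hzj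

lemma card_support_add_le {y z : ι → ℕ} (hyz : ∀ i j, y i ≠ 0 → z j ≠ 0 → i ≤ j) :
    #{i | y i ≠ 0} + #{i | z i ≠ 0} ≤ #{i | (y + z) i ≠ 0} + 1 := by
  have hunion : univ.filter (fun i => y i ≠ 0) ∪ univ.filter (fun i => z i ≠ 0) =
      univ.filter (fun i => (y + z) i ≠ 0) := by
    ext i
    simp only [mem_union, mem_filter, mem_univ, true_and, Pi.add_apply]
    omega
  have hinter : #(univ.filter (fun i => y i ≠ 0) ∩ univ.filter (fun i => z i ≠ 0)) ≤ 1 := by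
    refine card_le_one.2 fun i hi j hj => ?_
    simp only [mem_inter, mem_filter, mem_univ, true_and] at hi hj
    exact le_antisymm (hyz i j hi.1 hj.2) (hyz j i hj.1 hi.2)
  rw [← card_union_add_card_inter, hunion]
  omega

end Split

lemma card_support_le_sum {ι : Type*} [Fintype ι] (x : ι → ℕ) : #{i | x i ≠ 0} ≤ ∑ i, x i :=
  calc #{i | x i ≠ 0} = ∑ _ ∈ {i | x i ≠ 0}, 1 := card_eq_sum_ones _
    _ ≤ ∑ i ∈ {i | x i ≠ 0}, x i :=
      sum_le_sum fun _ hi => Nat.one_le_iff_ne_zero.2 (mem_filter.1 hi).2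
    _ ≤ ∑ i, x i := sum_le_sum_of_subset (subset_univ _)

section Composition

variable {N : ℕ}

lemma smin_add_left (p p' r : Fin N → ℝ) : smin (p + p') r = smin p r + smin p' r := by
  ext k
  simp only [smin, Pi.add_apply, ← sum_add_distrib]
  refine sum_congr rfl fun i _ => sum_congr rfl fun j _ => ?_
  split_ifs <;> ring

lemma smin_smul_left (c : ℝ) (p r : Fin N → ℝ) : smin (c • p) r = c • smin p r := by
  ext k
  simp only [smin, Pi.smul_apply, smul_eq_mul, mul_sum, mul_assoc, mul_ite, mul_zero]

lemma smax_add_right (q r r' : Fin N → ℝ) : smax q (r + r') = smax q r + smax q r' := by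
  ext k
  simp only [smax, Pi.add_apply, ← sum_add_distrib]
  refine sum_congr rfl fun i _ => sum_congr rfl fun j _ => ?_
  split_ifs <;> ring

lemma smax_smul_right (c : ℝ) (q r : Fin N → ℝ) : smax q (c • r) = c • smax q r := by
  ext k
  simp only [smax, Pi.smul_apply, smul_eq_mul, mul_sum, mul_ite, mul_zero, mul_left_comm c]

lemma smax_eq_sum_smul_of_le {q r : Fin N → ℝ} (hqr : ∀ i j, q i ≠ 0 → r j ≠ 0 → i ≤ j) :
    smax q r = (∑ i, q i) • r := by
  ext k
  simp only [smax, Pi.smul_apply, smul_eq_mul, sum_mul]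
  refine sum_congr rfl fun i _ => ?_
  calc ∑ j, (if max i j = k then q i * r j else 0)
      = ∑ j, if j = k then q i * r j else 0 := sum_congr rfl fun j _ => ?_
    _ = q i * r k := by simp
  by_cases hq : q i = 0
  · simp [hq]
  by_cases hr : r j = 0
  · simp [hr]
  rw [max_eq_right (hqr i j hq hr)]

variable [NeZero N]

lemma smin_delta_bot (r : Fin N → ℝ) : smin (delta ⊥) r = (∑ j, r j) • delta ⊥ := by
  ext k
  rw [smin, sum_eq_single ⊥ (fun i _ hi => by simp [delta, hi]) (by simp)]
  simp [delta, eq_comm (a := k), sum_ite_irrel]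

lemma smin_delta_top (r : Fin N → ℝ) : smin (delta ⊤) r = r := by
  ext k
  rw [smin, sum_eq_single ⊤ (fun i _ hi => by simp [delta, hi]) (by simp)]
  simp [delta]

lemma smax_delta_bot (q : Fin N → ℝ) : smax q (delta ⊥) = q := by
  ext k
  simp only [smax]
  rw [sum_comm, sum_eq_single ⊥ (fun j _ hj => by simp [delta, hj]) (by simp)]
  simp [delta]

lemma halfSwitch_eq : halfSwitch N = (1 / 2 : ℝ) • (delta ⊥ + delta ⊤) := by
  ext i
  simp only [halfSwitch, delta, Pi.smul_apply, Pi.add_apply, smul_eq_mul, Fin.ext_iff,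
    Fin.val_top, bot_eq_zero, Fin.val_zero]
  split_ifs <;> norm_num

lemma smax_smin_halfSwitch {q r : Fin N → ℝ} (hqr : ∀ i j, q i ≠ 0 → r j ≠ 0 → i ≤ j) :
    smax q (smin (halfSwitch N) r) = (1 / 2 : ℝ) • ((∑ j, r j) • q + (∑ i, q i) • r) := by
  rw [halfSwitch_eq, smin_smul_left, smin_add_left, smin_delta_bot, smin_delta_top,
    smax_smul_right, smax_add_right, smax_smul_right, smax_delta_bot, smax_eq_sum_smul_of_le hqr]

end Composition

lemma Realizable.halfSwitch_midpoint {N : ℕ} [NeZero N] {q r : Fin N → ℝ} {a b : ℕ}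
    (hq : Realizable {halfSwitch N} q a) (hr : Realizable {halfSwitch N} r b)
    (hq1 : ∑ i, q i = 1) (hr1 : ∑ j, r j = 1) (hqr : ∀ i j, q i ≠ 0 → r j ≠ 0 → i ≤ j) :
    Realizable {halfSwitch N} ((1 / 2 : ℝ) • (q + r)) (a + (1 + b)) := by
  have h := hq.parallel ((Realizable.single (Set.mem_singleton _)).series hr)
  rwa [smax_smin_halfSwitch hqr, hq1, hr1, one_smul, one_smul] at h

lemma one_le_card_support_of_sum_ne_zero {ι : Type*} [Fintype ι] {x : ι → ℕ}
    (hx : ∑ i, x i ≠ 0) : 1 ≤ #{i | x i ≠ 0} := by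
  obtain ⟨k, -, hk⟩ := exists_ne_zero_of_sum_ne_zero hx
  exact card_pos.2 ⟨k, mem_filter.2 ⟨mem_univ k, hk⟩⟩

lemma sum_cast_div_two_pow {ι : Type*} [Fintype ι] {x : ι → ℕ} {n : ℕ}
    (hx : ∑ i, x i = 2 ^ n) : ∑ i, (x i : ℝ) / 2 ^ n = 1 := by
  rw [← sum_div, ← Nat.cast_sum, hx]
  simp

lemma realizable_of_card_support_le_one {N n : ℕ} (S : Set (Fin N → ℝ)) {x : Fin N → ℕ}
    (hx : ∑ k, x k = 2 ^ n) (hsupp : #{k | x k ≠ 0} ≤ 1) :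
    Realizable S (fun k => (x k : ℝ) / 2 ^ n) 0 := by
  obtain ⟨s, -, hs⟩ := exists_ne_zero_of_sum_ne_zero (hx.trans_ne (by positivity))
  have hzero : ∀ k, k ≠ s → x k = 0 := fun k hk => by
    by_contra h
    exact hk (card_le_one.1 hsupp k (by simpa using h) s (by simpa using hs))
  have hxs : x s = 2 ^ n := by
    rwa [sum_eq_single s (fun k _ => hzero k) (by simp)] at hx
  convert Realizable.point (S := S) s using 1
  ext k
  by_cases hk : k = s
  · simp [hk, hxs, delta]
  · simp [hk, hzero k hk, delta]

theorem active_states_general (N : ℕ) (n : ℕ) (x : Fin N → ℕ)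
    (hx : ∑ k, x k = 2 ^ n) (m : ℕ)
    (hm : m = (Finset.univ.filter fun k => x k ≠ 0).card) :
    ∃ a ≤ f n m, Realizable {halfSwitch N} (fun k => (x k : ℝ) / 2 ^ n) a := by
  subst hm
  induction n generalizing x with
  | zero =>
    have hle : #{k | x k ≠ 0} ≤ 1 := (card_support_le_sum x).trans hx.le
    exact ⟨0, Nat.zero_le _, realizable_of_card_support_le_one _ hx hle⟩
  | succ n ih =>
    rcases le_or_gt #{k | x k ≠ 0} 1 with hle | hlt
    · exact ⟨0, Nat.zero_le _, realizable_of_card_support_le_one _ hx hle⟩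
    have : NeZero N := ⟨by rintro rfl; simp at hlt⟩
    obtain ⟨y, z, rfl, hy, hz, hyz⟩ := exists_add_eq_of_sum_eq_add x
      (T₁ := 2 ^ n) (T₂ := 2 ^ n) (hx.trans (by ring))
    obtain ⟨a, ha, hya⟩ := ih y hy
    obtain ⟨b, hb, hzb⟩ := ih z hz
    refine ⟨a + (1 + b), ?_, ?_⟩
    · have := f_add_one_add_f_le (n := n) (one_le_card_support_of_sum_ne_zero (by simp [hy]))
        (one_le_card_support_of_sum_ne_zero (by simp [hz])) hlt (card_support_add_le hyz)
      omega
    · convert hya.halfSwitch_midpoint hzb (sum_cast_div_two_pow hy) (sum_cast_div_two_pow hz)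
        fun i j hi hj => hyz i j (by simpa using hi) (by simpa using hj) using 1
      ext k
      simp only [Pi.add_apply, Pi.smul_apply, Nat.cast_add, smul_eq_mul, pow_succ]
      ring

/-- Active-state lemma: if `(x₀/2^n, …, x_{N-1}/2^n)` has exactly `m` nonzero
entries (active states), then it is realizable from the single `N`-state
½-pswitch using at most `f(n,m)` pswitches. -/
theorem active_states (N : ℕ) (hN : 1 ≤ N) (n : ℕ) (x : Fin N → ℕ)
    (hx : ∑ k, x k = 2 ^ n) (m : ℕ)
    (hm : m = (Finset.univ.filter fun k => x k ≠ 0).card) :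
    ∃ a ≤ f n m, Realizable {halfSwitch N} (fun k => (x k : ℝ) / 2 ^ n) a :=
  active_states_general N n x hx m hm
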